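/- Fix n ≥ 2 and let (d_1,…,d_r) be a composition of n. If c = (c_1,…,c_{n−1}) and c' = (c'_1,…,c'_{n−1}) are tuples of nonzero rationals such that both (c, w_{d_1,…,d_r}) and (c', w_{d_1,…,d_r}) are admissible, and if |c_{n−D_a}| = |c'_{n−D_a}| for every a ∈ {1,…,r−1}, then |c_i| = |c'_i| for every i ∈ {1,…,n−1}. In other words, up to signs, an admissible modulus c is completely determined by its r−1 entries at the positions n−D_1, …, n−D_{r−1}. -/

import Mathlib

/-- Partial sums `D_a = d_1 + ⋯ + d_a` of a composition (0-indexed: `psum d a = ∑_{b < a} d b`). -/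
def psum (d : ℕ → ℕ) (a : ℕ) : ℕ := ∑ b ∈ Finset.range a, d b

/-- `(c, w_{d_1,…,d_r})` is admissible: `c_{n-i+1} c_{n-i-1} = ± c_{n-i}²` for every
`i ∈ {1,…,n-1} \ {D_1,…,D_{r-1}}` (with the convention `c_0 = c_n = 1`). -/
def IsAdmissible (n r : ℕ) (d : ℕ → ℕ) (c : ℕ → ℚ) : Prop :=
  ∀ i, 1 ≤ i → i ≤ n - 1 → (∀ a, 1 ≤ a → a < r → i ≠ psum d a) →
    c (n - i + 1) * c (n - i - 1) = c (n - i) ^ 2 ∨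
      c (n - i + 1) * c (n - i - 1) = -(c (n - i) ^ 2)
/-!
On each block of indices strictly between two consecutive breakpoints `n - D_a`, the
admissibility relation says that `|c|` satisfies `|c_{j+1}| |c_{j-1}| = |c_j|²`, i.e. `|c|` is a
geometric progression there. A positive geometric progression on `[L, R]` is determined by its
values at `L` and `R`, because its ratio is the unique positive `(R - L)`-th root of
`|c_R| / |c_L|`. The values at the breakpoints are given, and the outermost blocks end at
`c_0 = c_n = 1`.
-/

section GeometricProgression

variable {K : Type*} {h h' : ℕ → K} {N : ℕ}

theorem eq_geom_of_mul_eq_sq [Field K] (hne : ∀ k ≤ N, h k ≠ 0)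
    (hrec : ∀ k, k + 2 ≤ N → h (k + 2) * h k = h (k + 1) ^ 2) :
    ∀ k ≤ N, h k = h 0 * (h 1 / h 0) ^ k := by
  have hratio : ∀ k, k + 1 ≤ N → h (k + 1) * h 0 = h k * h 1 := by
    intro k
    induction k with
    | zero => intro; ring
    | succ k ih =>
      intro hk
      apply mul_right_cancel₀ (hne k (by omega))
      calc h (k + 2) * h 0 * h k = h (k + 1) ^ 2 * h 0 := by rw [← hrec k hk]; ring
        _ = h (k + 1) * (h k * h 1) := by rw [← ih (by omega)]; ring
        _ = h (k + 1) * h 1 * h k := by ring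
  intro k
  induction k with
  | zero => intro; ring
  | succ k ih =>
    intro hk
    rw [pow_succ, ← mul_assoc, ← ih (by omega), mul_div_assoc', eq_div_iff (hne 0 N.zero_le)]
    exact hratio k hk

theorem eq_of_mul_eq_sq_of_pos [Field K] [LinearOrder K] [IsStrictOrderedRing K] (hN : 0 < N)
    (hpos : ∀ k ≤ N, 0 < h k) (hpos' : ∀ k ≤ N, 0 < h' k)
    (hrec : ∀ k, k + 2 ≤ N → h (k + 2) * h k = h (k + 1) ^ 2)
    (hrec' : ∀ k, k + 2 ≤ N → h' (k + 2) * h' k = h' (k + 1) ^ 2)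
    (h0 : h 0 = h' 0) (hend : h N = h' N) :
    ∀ k ≤ N, h k = h' k := by
  have hgeom := eq_geom_of_mul_eq_sq (fun k hk => (hpos k hk).ne') hrec
  have hgeom' := eq_geom_of_mul_eq_sq (fun k hk => (hpos' k hk).ne') hrec'
  have hratio : h 1 / h 0 = h' 1 / h' 0 := by
    refine (pow_left_inj₀ (div_pos (hpos 1 hN) (hpos 0 hN.le)).le
      (div_pos (hpos' 1 hN) (hpos' 0 hN.le)).le hN.ne').mp (mul_left_cancel₀ (hpos 0 hN.le).ne' ?_)
    rw [← hgeom N le_rfl, hend, hgeom' N le_rfl, h0]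
  intro k hk
  rw [hgeom k hk, hgeom' k hk, hratio, h0]

end GeometricProgression

theorem exists_lt_and_le_succ_of_lt_of_le {α : Type*} [LinearOrder α] (f : ℕ → α) {x : α}
    {r : ℕ} (h0 : f 0 < x) (hr : x ≤ f r) : ∃ a < r, f a < x ∧ x ≤ f (a + 1) := by
  induction r with
  | zero => exact absurd hr h0.not_ge
  | succ r ih =>
    by_cases hx : x ≤ f r
    · obtain ⟨a, har, ha⟩ := ih hx
      exact ⟨a, by omega, ha⟩
    · exact ⟨r, by omega, not_le.mp hx, hr⟩

theorem psum_mono (d : ℕ → ℕ) : Monotone (psum d) :=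
  fun _ _ hab => Finset.sum_le_sum_of_subset (Finset.range_subset_range.mpr hab)

theorem psum_ne_of_lt_of_lt {d : ℕ → ℕ} {a m : ℕ} (hlo : psum d a < m) (hhi : m < psum d (a + 1))
    (b : ℕ) : m ≠ psum d b := by
  rcases le_or_gt b a with hba | hab
  · have := psum_mono d hba
    omega
  · have := psum_mono d (show a + 1 ≤ b by omega)
    omega

theorem IsAdmissible.abs_mul_abs_eq_sq {n r : ℕ} {d : ℕ → ℕ} {c : ℕ → ℚ}
    (hadm : IsAdmissible n r d c) {j : ℕ} (hj0 : 0 < j) (hjn : j < n)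
    (hj : ∀ a, 1 ≤ a → a < r → n - j ≠ psum d a) :
    |c (j + 1)| * |c (j - 1)| = |c j| ^ 2 := by
  have hrel := hadm (n - j) (by omega) (by omega) hj
  rw [Nat.sub_sub_self hjn.le] at hrel
  rw [← abs_mul, ← sq_abs]
  rcases hrel with hrel | hrel <;> simp [hrel]

theorem ne_zero_of_le_of_endpoints {n : ℕ} {c : ℕ → ℚ} (hc0 : c 0 = 1) (hcn : c n = 1)
    (hcne : ∀ i, 1 ≤ i → i ≤ n - 1 → c i ≠ 0) : ∀ j ≤ n, c j ≠ 0 := by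
  intro j hj
  rcases Nat.eq_zero_or_pos j with rfl | hj0
  · simp [hc0]
  rcases hj.eq_or_lt with rfl | hjn
  · simp [hcn]
  exact hcne j hj0 (by omega)

theorem IsAdmissible.abs_eq_abs_of_block {n r : ℕ} {d : ℕ → ℕ} {c c' : ℕ → ℚ}
    (hadm : IsAdmissible n r d c) (hadm' : IsAdmissible n r d c')
    (hne : ∀ j ≤ n, c j ≠ 0) (hne' : ∀ j ≤ n, c' j ≠ 0) {a : ℕ}
    (hblock : psum d a < psum d (a + 1)) (hle : psum d (a + 1) ≤ n)
    (hL : |c (n - psum d (a + 1))| = |c' (n - psum d (a + 1))|)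
    (hR : |c (n - psum d a)| = |c' (n - psum d a)|) :
    ∀ j, n - psum d (a + 1) ≤ j → j ≤ n - psum d a → |c j| = |c' j| := by
  set L := n - psum d (a + 1) with hL_def
  have hrec : ∀ f : ℕ → ℚ, IsAdmissible n r d f →
      ∀ k, k + 2 ≤ psum d (a + 1) - psum d a →
        |f (L + k + 2)| * |f (L + k)| = |f (L + k + 1)| ^ 2 := fun f hf k hk =>
    hf.abs_mul_abs_eq_sq (j := L + k + 1) (by omega) (by omega)
      (fun b _ _ => psum_ne_of_lt_of_lt (a := a) (by omega) (by omega) b)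
  have hblock_eq := eq_of_mul_eq_sq_of_pos (h := fun k => |c (L + k)|)
    (h' := fun k => |c' (L + k)|) (N := psum d (a + 1) - psum d a) (by omega)
    (fun k hk => abs_pos.mpr (hne _ (by omega))) (fun k hk => abs_pos.mpr (hne' _ (by omega)))
    (hrec c hadm) (hrec c' hadm') (by simpa using hL)
    (by simpa [show L + (psum d (a + 1) - psum d a) = n - psum d a by omega] using hR)
  intro j hLj hjR
  simpa [show L + (j - L) = j by omega] using hblock_eq (j - L) (by omega)

theorem stmt11_general (n : ℕ) (r : ℕ) (d : ℕ → ℕ)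
    (hsum : psum d r = n)
    (c c' : ℕ → ℚ)
    (hc0 : c 0 = 1) (hcn : c n = 1) (hc0' : c' 0 = 1) (hcn' : c' n = 1)
    (hcne : ∀ i, 1 ≤ i → i ≤ n - 1 → c i ≠ 0)
    (hcne' : ∀ i, 1 ≤ i → i ≤ n - 1 → c' i ≠ 0)
    (hadm : IsAdmissible n r d c) (hadm' : IsAdmissible n r d c')
    (heq : ∀ a, 1 ≤ a → a < r → |c (n - psum d a)| = |c' (n - psum d a)|) :
    ∀ i, 1 ≤ i → i ≤ n - 1 → |c i| = |c' i| := by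
  intro i hi1 hi2
  obtain ⟨a, har, hlo, hhi⟩ := exists_lt_and_le_succ_of_lt_of_le (psum d) (x := n - i) (r := r)
    (by simp only [psum, Finset.range_zero, Finset.sum_empty]; omega) (by rw [hsum]; omega)
  have hle : psum d (a + 1) ≤ n := hsum ▸ psum_mono d har
  have hL : |c (n - psum d (a + 1))| = |c' (n - psum d (a + 1))| := by
    rcases (show a + 1 ≤ r by omega).eq_or_lt with hra | hra
    · rw [hra, hsum, Nat.sub_self, hc0, hc0']
    · exact heq (a + 1) (by omega) hra
  have hR : |c (n - psum d a)| = |c' (n - psum d a)| := by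
    rcases Nat.eq_zero_or_pos a with rfl | ha
    · simp only [psum, Finset.range_zero, Finset.sum_empty, Nat.sub_zero, hcn, hcn']
    · exact heq a ha har
  exact hadm.abs_eq_abs_of_block hadm' (ne_zero_of_le_of_endpoints hc0 hcn hcne)
    (ne_zero_of_le_of_endpoints hc0' hcn' hcne') (by omega) hle hL hR i (by omega) (by omega)

/-- If `(c, w_{d_1,…,d_r})` and `(c', w_{d_1,…,d_r})` are both admissible and
`|c_{n-D_a}| = |c'_{n-D_a}|` for all `a ∈ {1,…,r-1}`, then `|c_i| = |c'_i|` for all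
`i ∈ {1,…,n-1}`: up to signs, an admissible modulus is determined by its entries at the
positions `n-D_1, …, n-D_{r-1}`. -/
theorem stmt11 (n : ℕ) (hn : 2 ≤ n) (r : ℕ) (hr : 0 < r) (d : ℕ → ℕ)
    (hd : ∀ a < r, 0 < d a) (hsum : psum d r = n)
    (c c' : ℕ → ℚ)
    (hc0 : c 0 = 1) (hcn : c n = 1) (hc0' : c' 0 = 1) (hcn' : c' n = 1)
    (hcne : ∀ i, 1 ≤ i → i ≤ n - 1 → c i ≠ 0)
    (hcne' : ∀ i, 1 ≤ i → i ≤ n - 1 → c' i ≠ 0)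
    (hadm : IsAdmissible n r d c) (hadm' : IsAdmissible n r d c')
    (heq : ∀ a, 1 ≤ a → a < r → |c (n - psum d a)| = |c' (n - psum d a)|) :
    ∀ i, 1 ≤ i → i ≤ n - 1 → |c i| = |c' i| :=
  stmt11_general n r d hsum c c' hc0 hcn hc0' hcn' hcne hcne' hadm hadm' heq
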